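/- arXiv:math/0401433 — 2 statements merged into one kernel-verified Lean document; each statement's English description precedes it below -/
import Mathlib

section
/- Let F: C → C' be a functor between categories of bounded complexes over exact categories preserving quasi-isomorphisms and cocylinders, and suppose F satisfies: (App1) a map in C is a quasi-isomorphism iff its image is; and (HApp2ᵒᵖ) every map f: Y → FX in C' fits into a homotopy commutative square with a map g: X' → X in C and quasi-isomorphisms s: Y' → Y, t: Y' → FX' such that f∘s ∼ Fg∘t. Then F also satisfies the strict dual approximation property (App2ᵒᵖ): every map f: Y → FX fits into a strictly commutative such square (after replacing X' by the cocylinder of g). -/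
open CategoryTheory CategoryTheory.Limits

universe v u v' u'

variable {A : Type u} [Category.{v} A] [Abelian A]
variable {A' : Type u'} [Category.{v'} A'] [Abelian A']
variable (φ : A ⥤ A') [φ.Additive]

/-- The functor on bounded cochain complexes induced by the exact functor `φ`. -/
noncomputable abbrev inducedF :
    CochainComplex A ℤ ⥤ CochainComplex A' ℤ :=
  φ.mapHomologicalComplex (ComplexShape.up ℤ)

/-- A cochain complex is bounded if it vanishes outside finitely many degrees. -/
def IsBounded {C : Type*} [Category C] [Preadditive C]
    (K : CochainComplex C ℤ) : Prop :=
  ∃ a b : ℤ, ∀ n : ℤ, (n < a ∨ b < n) → IsZero (K.X n)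


namespace Appx

open HomologicalComplex

variable {B : Type*} [Category B] [Abelian B]
variable {K L : CochainComplex B ℤ}

lemma eqToHom_d (M : CochainComplex B ℤ) {i i' j : ℤ} (h : i = i') :
    eqToHom (congrArg M.X h) ≫ M.d i' j = M.d i j := by subst h; simp

lemma d_eqToHom (M : CochainComplex B ℤ) {i j j' : ℤ} (h : j = j') :
    M.d i j ≫ eqToHom (congrArg M.X h) = M.d i j' := by subst h; simp

lemma eqToHom_d_assoc (M : CochainComplex B ℤ) {i i' j : ℤ} (h : i = i') {Z : B} (w : M.X j ⟶ Z) :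
    eqToHom (congrArg M.X h) ≫ M.d i' j ≫ w = M.d i j ≫ w := by subst h; simp

lemma eqToHom_f' {M N : CochainComplex B ℤ} (ψ : M ⟶ N) {i i' : ℤ} (h : i = i') :
    eqToHom (congrArg M.X h) ≫ ψ.f i' = ψ.f i ≫ eqToHom (congrArg N.X h) := by subst h; simp

lemma homCongr {Y : CochainComplex B ℤ} {M : CochainComplex B ℤ}
    (f : ∀ i j, Y.X i ⟶ M.X j) {i j j' : ℤ} (h : j = j') :
    f i j ≫ eqToHom (congrArg M.X h) = f i j' := by subst h; simp

lemma homCongr' {Y M : CochainComplex B ℤ}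
    (f : ∀ i j, Y.X i ⟶ M.X j) {i j j' : ℤ} (h : j = j') :
    f i j' = f i j ≫ eqToHom (congrArg M.X h) := by subst h; simp

/-- components of the cocylinder of g : K ⟶ L -/
noncomputable abbrev cocX (g : K ⟶ L) (n : ℤ) : B := K.X n ⊞ (L.X n ⊞ L.X (n-1))

noncomputable def cocD (g : K ⟶ L) (n : ℤ) : cocX g n ⟶ cocX g (n+1) :=
  biprod.lift (biprod.fst ≫ K.d n (n+1))
    (biprod.lift (biprod.snd ≫ biprod.fst ≫ L.d n (n+1))
      (-(biprod.fst ≫ g.f n ≫ (L.XIsoOfEq (show n = n+1-1 by ring)).hom)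
        + biprod.snd ≫ biprod.fst ≫ (L.XIsoOfEq (show n = n+1-1 by ring)).hom
        - biprod.snd ≫ biprod.snd ≫ L.d (n-1) (n+1-1)))

lemma eqToHom_cocX_fst (g : K ⟶ L) {m m' : ℤ} (h' : cocX g m = cocX g m') (h : m = m') :
    eqToHom h' ≫ biprod.fst = biprod.fst ≫ eqToHom (congrArg K.X h) := by
  subst h; simp

lemma eqToHom_cocX_snd_assoc (g : K ⟶ L) {m m' : ℤ} (h' : cocX g m = cocX g m') {Z : B}
    (w : L.X m' ⊞ L.X (m'-1) ⟶ Z) (h : m = m') :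
    eqToHom h' ≫ biprod.snd ≫ w =
      biprod.snd ≫ eqToHom (congrArg (fun n => L.X n ⊞ L.X (n-1)) h) ≫ w := by
  subst h; simp

lemma eqToHom_pair_fst {m m' : ℤ} (h' : (L.X m ⊞ L.X (m-1)) = (L.X m' ⊞ L.X (m'-1)))
    (h : m = m') :
    eqToHom h' ≫ biprod.fst = biprod.fst ≫ eqToHom (congrArg L.X h) := by subst h; simp

lemma eqToHom_pair_snd {m m' : ℤ} (h' : (L.X m ⊞ L.X (m-1)) = (L.X m' ⊞ L.X (m'-1)))
    (h : m = m') :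
    eqToHom h' ≫ biprod.snd = biprod.snd ≫ eqToHom (congrArg (fun n : ℤ => L.X (n-1)) h) := by
  subst h; simp

lemma eqToHom_L {m m' : ℤ} (h' : L.X m = L.X m') {Z : B} (w : L.X m' ⟶ Z) (h : m = m') :
    eqToHom h' ≫ w = eqToHom (congrArg L.X h) ≫ w := by subst h; simp

lemma cocD_sq (g : K ⟶ L) (n : ℤ) : cocD g n ≫ cocD g (n+1) = 0 := by
  ext <;> simp [cocD, XIsoOfEq, eqToHom_d, d_eqToHom, eqToHom_d_assoc]

/-- the cocylinder of `g` -/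
noncomputable abbrev coc (g : K ⟶ L) : CochainComplex B ℤ :=
  CochainComplex.of (cocX g) (cocD g) (cocD_sq g)

@[simp] lemma coc_X (g : K ⟶ L) (n : ℤ) : (coc g).X n = cocX g n := rfl

@[simp] lemma coc_d (g : K ⟶ L) (n : ℤ) : (coc g).d n (n+1) = cocD g n :=
  CochainComplex.of_d _ _ n

lemma coc_d_eq (g : K ⟶ L) {i j : ℤ} (h : i + 1 = j) :
    (coc g).d i j = cocD g i ≫ eqToHom (congrArg (cocX g) h) := by
  subst h; simp

/-- projection to the source -/
noncomputable def cocP (g : K ⟶ L) : coc g ⟶ K where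
  f n := biprod.fst
  comm' := by
    rintro i j (rfl : i + 1 = j)
    simp [cocD]

/-- projection to the target -/
noncomputable def cocQ (g : K ⟶ L) : coc g ⟶ L where
  f n := biprod.snd ≫ biprod.fst
  comm' := by
    rintro i j (rfl : i + 1 = j)
    simp [cocD]

/-- inclusion of the source -/
noncomputable def cocI (g : K ⟶ L) : K ⟶ coc g where
  f n := biprod.lift (𝟙 _) (biprod.lift (g.f n) 0)
  comm' := by
    rintro i j (rfl : i + 1 = j)
    apply biprod.hom_ext
    · simp [cocD]
    apply biprod.hom_ext <;> simp [cocD, XIsoOfEq, homCongr (fun i j => g.f i ≫ 0)]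

lemma cocI_cocP (g : K ⟶ L) : cocI g ≫ cocP g = 𝟙 K := by
  ext n
  simp [cocI, cocP]

noncomputable def cocHtp (g : K ⟶ L) : Homotopy (cocP g ≫ cocI g) (𝟙 (coc g)) where
  hom i j :=
    if h : j + 1 = i then
      -(biprod.snd ≫ biprod.snd ≫ eqToHom (congrArg L.X (show i - 1 = j by omega))
        ≫ biprod.inl ≫ biprod.inr)
    else 0
  zero i j h := dif_neg h
  comm i := by
    rw [dNext_eq _ (show (ComplexShape.up ℤ).Rel i (i+1) from rfl),
      prevD_eq _ (show (i:ℤ)-1+1 = i by ring)]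
    rw [dif_pos rfl, dif_pos (show (i-1) + 1 = i by ring),
      coc_d_eq g (show (i-1) + 1 = i by ring)]
    apply biprod.hom_ext
    · simp (disch := omega) [cocD, cocP, cocI, XIsoOfEq, eqToHom_d, d_eqToHom,
        eqToHom_d_assoc, eqToHom_cocX_fst, eqToHom_cocX_snd_assoc, eqToHom_pair_fst,
        eqToHom_pair_snd, homCongr]
    apply biprod.hom_ext <;>
      (simp (disch := omega) [cocD, cocP, cocI, XIsoOfEq, eqToHom_d, d_eqToHom,
        eqToHom_d_assoc, eqToHom_cocX_fst, eqToHom_cocX_snd_assoc, eqToHom_pair_fst,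
        eqToHom_pair_snd, homCongr]) <;> abel

noncomputable def cocHEquiv (g : K ⟶ L) : HomotopyEquiv (coc g) K where
  hom := cocP g
  inv := cocI g
  homotopyHomInvId := cocHtp g
  homotopyInvHomId := Homotopy.ofEq (cocI_cocP g)

instance (g : K ⟶ L) : QuasiIso (cocP g) :=
  (inferInstance : QuasiIso (cocHEquiv g).hom)

/-- lifting a homotopy-commuting pair to the cocylinder -/
noncomputable def cocLift (g : K ⟶ L) {Y : CochainComplex B ℤ}
    (t : Y ⟶ K) (a : Y ⟶ L) (H : Homotopy a (t ≫ g)) : Y ⟶ coc g where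
  f n := biprod.lift (t.f n) (biprod.lift (a.f n) (H.hom n (n-1)))
  comm' := by
    rintro i j (rfl : i + 1 = j)
    apply biprod.hom_ext
    · simp [cocD]
    apply biprod.hom_ext
    · simp [cocD]
    · have hc := H.comm i
      rw [dNext_eq _ (show (ComplexShape.up ℤ).Rel i (i+1) from rfl),
        prevD_eq _ (show (i:ℤ)-1+1 = i by ring)] at hc
      simp only [coc_d, CochainComplex.of_d, cocD, XIsoOfEq, eqToIso.hom, Category.assoc, biprod.lift_snd,
        Preadditive.comp_add, Preadditive.comp_sub, Preadditive.comp_neg,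
        biprod.lift_fst_assoc, biprod.lift_snd_assoc, biprod.lift_fst,
        HomologicalComplex.comp_f]
      rw [homCongr' H.hom (show (i:ℤ) = i+1-1 by ring),
        homCongr' L.d (show (i:ℤ) = i+1-1 by ring), hc]
      simp only [Preadditive.add_comp, Preadditive.comp_add, Preadditive.sub_comp,
        HomologicalComplex.comp_f, Category.assoc]
      abel

lemma cocLift_P (g : K ⟶ L) {Y : CochainComplex B ℤ}
    (t : Y ⟶ K) (a : Y ⟶ L) (H : Homotopy a (t ≫ g)) :
    cocLift g t a H ≫ cocP g = t := by
  ext n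
  simp [cocLift, cocP]

lemma cocLift_Q (g : K ⟶ L) {Y : CochainComplex B ℤ}
    (t : Y ⟶ K) (a : Y ⟶ L) (H : Homotopy a (t ≫ g)) :
    cocLift g t a H ≫ cocQ g = a := by
  ext n
  simp [cocLift, cocQ]

section Functor

variable {B' : Type*} [Category B'] [Abelian B'] (φ : B ⥤ B') [φ.Additive]

instance : PreservesBinaryBiproducts φ :=
  have : PreservesBiproductsOfShape WalkingPair φ :=
    PreservesFiniteBiproducts.preserves
  preservesBinaryBiproducts_of_preservesBiproducts φ

local notation "F" => φ.mapHomologicalComplex (ComplexShape.up ℤ)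

lemma eqToHom_mapf (g : K ⟶ L) {i i' : ℤ} (h' : φ.obj (K.X i) = φ.obj (K.X i'))
    (h : i = i') :
    eqToHom h' ≫ φ.map (g.f i') =
      φ.map (g.f i) ≫ eqToHom (congrArg (fun n => φ.obj (L.X n)) h) := by subst h; simp


noncomputable def cocFX (g : K ⟶ L) (n : ℤ) :
    φ.obj (cocX g n) ≅ φ.obj (K.X n) ⊞ (φ.obj (L.X n) ⊞ φ.obj (L.X (n-1))) :=
  φ.mapBiprod _ _ ≪≫ biprod.mapIso (Iso.refl _) (φ.mapBiprod _ _)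

lemma mapBiprod_hom_fst (X Y : B) : (φ.mapBiprod X Y).hom ≫ biprod.fst = φ.map biprod.fst :=
  biprod.lift_fst _ _

lemma mapBiprod_hom_snd (X Y : B) : (φ.mapBiprod X Y).hom ≫ biprod.snd = φ.map biprod.snd :=
  biprod.lift_snd _ _

lemma cocFX_fst (g : K ⟶ L) (n : ℤ) :
    (cocFX φ g n).hom ≫ biprod.fst = φ.map biprod.fst := by
  simp only [cocFX, Iso.trans_hom, biprod.mapIso_hom, Iso.refl_hom, Category.assoc, biprod.map_fst,
    Category.comp_id, mapBiprod_hom_fst]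

lemma cocFX_snd_fst (g : K ⟶ L) (n : ℤ) :
    (cocFX φ g n).hom ≫ biprod.snd ≫ biprod.fst = φ.map (biprod.snd ≫ biprod.fst) := by
  simp only [cocFX, Iso.trans_hom, biprod.mapIso_hom, Iso.refl_hom, Category.assoc,
    biprod.map_snd_assoc, mapBiprod_hom_fst, Functor.map_comp]
  rw [← Category.assoc, mapBiprod_hom_snd]

lemma cocFX_snd_snd (g : K ⟶ L) (n : ℤ) :
    (cocFX φ g n).hom ≫ biprod.snd ≫ biprod.snd = φ.map (biprod.snd ≫ biprod.snd) := by
  simp only [cocFX, Iso.trans_hom, biprod.mapIso_hom, Iso.refl_hom, Category.assoc,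
    biprod.map_snd_assoc, mapBiprod_hom_snd, Functor.map_comp]
  rw [← Category.assoc, mapBiprod_hom_snd]

lemma cocFX_fst_assoc (g : K ⟶ L) (n : ℤ) {Z : B'} (h : φ.obj (K.X n) ⟶ Z) :
    (cocFX φ g n).hom ≫ biprod.fst ≫ h = φ.map biprod.fst ≫ h := by
  rw [← Category.assoc, cocFX_fst]

lemma cocFX_snd_fst_assoc (g : K ⟶ L) (n : ℤ) {Z : B'} (h : φ.obj (L.X n) ⟶ Z) :
    (cocFX φ g n).hom ≫ biprod.snd ≫ biprod.fst ≫ h = φ.map (biprod.snd ≫ biprod.fst) ≫ h := by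
  rw [← cocFX_snd_fst φ g]; simp only [Category.assoc]

lemma cocFX_snd_snd_assoc (g : K ⟶ L) (n : ℤ) {Z : B'} (h : φ.obj (L.X (n-1)) ⟶ Z) :
    (cocFX φ g n).hom ≫ biprod.snd ≫ biprod.snd ≫ h = φ.map (biprod.snd ≫ biprod.snd) ≫ h := by
  rw [← cocFX_snd_snd φ g]; simp only [Category.assoc]

lemma cocFIso_comm (g : K ⟶ L) (i : ℤ) :
    (cocFX φ g i).hom ≫ biprod.lift (biprod.fst ≫ φ.map (K.d i (i+1)))
      (biprod.lift (biprod.snd ≫ biprod.fst ≫ φ.map (L.d i (i+1)))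
        (-(biprod.fst ≫ φ.map (g.f i) ≫
            eqToHom (congrArg (fun n => φ.obj (L.X n)) (show i = i+1-1 by ring)))
          + biprod.snd ≫ biprod.fst ≫
            eqToHom (congrArg (fun n => φ.obj (L.X n)) (show i = i+1-1 by ring))
          - biprod.snd ≫ biprod.snd ≫ φ.map (L.d (i-1) (i+1-1)))) =
      φ.map (cocD g i) ≫ (cocFX φ g (i+1)).hom := by
  apply biprod.hom_ext
  · simp [cocD, cocFX_fst, cocFX_fst_assoc, ← Functor.map_comp]
  apply biprod.hom_ext
  · simp [cocD, cocFX_snd_fst, cocFX_snd_fst_assoc, ← Functor.map_comp]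
  · simp only [Category.assoc, cocFX_snd_snd, ← Functor.map_comp]
    simp [cocD, XIsoOfEq, cocFX_fst_assoc, cocFX_snd_fst_assoc, cocFX_snd_snd_assoc]
    simp (disch := omega) [Functor.map_comp, eqToHom_map, eqToHom_mapf φ g]

/-- the induced functor commutes with the cocylinder construction -/
noncomputable def cocFIso (g : K ⟶ L) :
    (F).obj (coc g) ≅ coc ((F).map g) :=
  HomologicalComplex.Hom.isoOfComponents
    (fun n => cocFX φ g n)
    (by
      rintro i j (rfl : i + 1 = j)
      rw [coc_d, Functor.mapHomologicalComplex_obj_d, coc_d]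
      exact cocFIso_comm φ g i)

lemma map_cocP (g : K ⟶ L) :
    (F).map (cocP g) = (cocFIso φ g).hom ≫ cocP ((F).map g) := by
  ext n
  exact (cocFX_fst φ g n).symm

lemma map_cocQ (g : K ⟶ L) :
    (F).map (cocQ g) = (cocFIso φ g).hom ≫ cocQ ((F).map g) := by
  ext n
  exact (cocFX_snd_fst φ g n).symm

end Functor

end Appx

open Appx

/-- if the induced functor `F` on complexes satisfies `App1`
(a map is a quasi-isomorphism iff its image is) and the dual homotopy
approximation property `HApp2ᵒᵖ` (every map `f : Y ⟶ FX` fits into a homotopy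
commutative square with a map `g : X' ⟶ X` and quasi-isomorphisms `s, t`), then
`F` satisfies the strict dual approximation property `App2ᵒᵖ`: every such map
fits into a strictly commutative square. -/
theorem happ2op_implies_app2op
    (hApp1 : ∀ {X Y : CochainComplex A ℤ} (f : X ⟶ Y),
      QuasiIso f ↔ QuasiIso ((inducedF φ).map f))
    (hHApp2op : ∀ (X : CochainComplex A ℤ) (Y : CochainComplex A' ℤ)
      (f : Y ⟶ (inducedF φ).obj X), IsBounded X → IsBounded Y →
      ∃ (X' : CochainComplex A ℤ) (g : X' ⟶ X) (Y' : CochainComplex A' ℤ)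
        (s : Y' ⟶ Y) (t : Y' ⟶ (inducedF φ).obj X'),
        QuasiIso s ∧ QuasiIso t ∧
        Nonempty (Homotopy (s ≫ f) (t ≫ (inducedF φ).map g))) :
    ∀ (X : CochainComplex A ℤ) (Y : CochainComplex A' ℤ)
      (f : Y ⟶ (inducedF φ).obj X), IsBounded X → IsBounded Y →
      ∃ (X' : CochainComplex A ℤ) (g : X' ⟶ X) (Y' : CochainComplex A' ℤ)
        (s : Y' ⟶ Y) (t : Y' ⟶ (inducedF φ).obj X'),
        QuasiIso s ∧ QuasiIso t ∧ s ≫ f = t ≫ (inducedF φ).map g := by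
  intro X Y f hX hY
  obtain ⟨X', g, Y', s, t, hs, ht, ⟨H⟩⟩ := hHApp2op X Y f hX hY
  have hlift : QuasiIso (cocLift ((inducedF φ).map g) t (s ≫ f) H) := by
    have h2 : QuasiIso (cocLift ((inducedF φ).map g) t (s ≫ f) H ≫
        cocP ((inducedF φ).map g)) := by
      rw [cocLift_P]; exact ht
    exact quasiIso_of_comp_right _ (cocP ((inducedF φ).map g))
  refine ⟨coc g, cocQ g, Y', s,
    cocLift ((inducedF φ).map g) t (s ≫ f) H ≫ (cocFIso φ g).inv, hs,
    inferInstance, ?_⟩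
  rw [Category.assoc, map_cocQ φ g, Iso.inv_hom_id_assoc, cocLift_Q]
end

section
/- Let F: D^b(A) → D^b(A') be a triangulated functor induced by an exact-functor-induced map on complexes satisfying App1 and App2ᵒᵖ. Then F is full: every morphism FX → FX' in D^b(A') represented by a fraction FX ← Y → FX' is the image of a morphism X → X' in D^b(A). -/
/-!
Apply `App2ᵒᵖ` to the map `Y → F(X ⊞ X')` with components `s` and `f`. It yields
`w : Z → X ⊞ X'` and quasi-isomorphisms `a : W → Y`, `t : W → F Z` such that, after
projecting, `a ≫ s = t ≫ F (w ≫ fst)` and `a ≫ f = t ≫ F (w ≫ snd)`. The first square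
shows, by two out of three, that `F (w ≫ fst)` is a quasi-isomorphism, hence so is `w ≫ fst`
by `App1`; the fraction `(w ≫ fst, w ≫ snd)` is then the required preimage of `(s, f)`.
-/

open CategoryTheory CategoryTheory.Limits

universe v u v' u'

variable {A : Type u} [Category.{v} A] [Abelian A]
variable {A' : Type u'} [Category.{v'} A'] [Abelian A']
variable (φ : A ⥤ A') [φ.Additive]

namespace CategoryTheory.Functor

variable {C D : Type*} [Category C] [Category D] [Preadditive C] [Preadditive D]
  {F : C ⥤ D} [F.Additive] {X₁ X₂ : C} [HasBinaryBiproduct X₁ X₂] {Y : D}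
  (f₁ : Y ⟶ F.obj X₁) (f₂ : Y ⟶ F.obj X₂)

/-- The map `(f₁, f₂)ᵗ : Y ⟶ F (X₁ ⊞ X₂)`. -/
noncomputable def mapBiprodLift : Y ⟶ F.obj (X₁ ⊞ X₂) :=
  f₁ ≫ F.map biprod.inl + f₂ ≫ F.map biprod.inr

@[simp]
theorem mapBiprodLift_map_fst : mapBiprodLift f₁ f₂ ≫ F.map biprod.fst = f₁ := by
  simp [mapBiprodLift, ← F.map_comp]

@[simp]
theorem mapBiprodLift_map_snd : mapBiprodLift f₁ f₂ ≫ F.map biprod.snd = f₂ := by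
  simp [mapBiprodLift, ← F.map_comp]

variable {f₁ f₂} {W : D} {Z : C} {a : W ⟶ Y} {t : W ⟶ F.obj Z} {w : Z ⟶ X₁ ⊞ X₂}

theorem comp_eq_comp_map_fst_of_comp_mapBiprodLift_eq
    (h : a ≫ mapBiprodLift f₁ f₂ = t ≫ F.map w) :
    a ≫ f₁ = t ≫ F.map (w ≫ biprod.fst) := by
  simpa using h =≫ F.map biprod.fst

theorem comp_eq_comp_map_snd_of_comp_mapBiprodLift_eq
    (h : a ≫ mapBiprodLift f₁ f₂ = t ≫ F.map w) :
    a ≫ f₂ = t ≫ F.map (w ≫ biprod.snd) := by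
  simpa using h =≫ F.map biprod.snd

end CategoryTheory.Functor

namespace HomologicalComplex

variable {C ι : Type*} [Category C] [Abelian C] {c : ComplexShape ι}
  {K L M N : HomologicalComplex C c} {a : K ⟶ L} {s : L ⟶ N} {t : K ⟶ M} {u : M ⟶ N}

theorem quasiIso_of_comp_eq_comp (h : a ≫ s = t ≫ u) [QuasiIso a] [QuasiIso s] [QuasiIso t] :
    QuasiIso u := by
  have : QuasiIso (t ≫ u) := h ▸ inferInstance
  exact quasiIso_of_comp_left t u

end HomologicalComplex

theorem induced_derived_functor_full
    (hApp1 : ∀ {X Y : CochainComplex A ℤ} (f : X ⟶ Y),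
      QuasiIso f ↔ QuasiIso ((inducedF φ).map f))
    (hApp2op : ∀ (X : CochainComplex A ℤ) (Y : CochainComplex A' ℤ)
      (f : Y ⟶ (inducedF φ).obj X),
      ∃ (X' : CochainComplex A ℤ) (g : X' ⟶ X) (Y' : CochainComplex A' ℤ)
        (s : Y' ⟶ Y) (t : Y' ⟶ (inducedF φ).obj X'),
        QuasiIso s ∧ QuasiIso t ∧ s ≫ f = t ≫ (inducedF φ).map g)
    (X X' : CochainComplex A ℤ)
    (Y : CochainComplex A' ℤ) (s : Y ⟶ (inducedF φ).obj X)
    (f : Y ⟶ (inducedF φ).obj X') (hs : QuasiIso s) :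
    ∃ (Z : CochainComplex A ℤ) (u : Z ⟶ X) (v : Z ⟶ X'), QuasiIso u ∧
      ∃ (W : CochainComplex A' ℤ) (a : W ⟶ Y) (b : W ⟶ (inducedF φ).obj Z),
        QuasiIso a ∧ QuasiIso b ∧
        Nonempty (Homotopy (a ≫ s) (b ≫ (inducedF φ).map u)) ∧
        Nonempty (Homotopy (a ≫ f) (b ≫ (inducedF φ).map v)) := by
  obtain ⟨Z, w, W, a, t, ha, ht, hw⟩ :=
    hApp2op (X ⊞ X') Y (Functor.mapBiprodLift s f)
  have hu := Functor.comp_eq_comp_map_fst_of_comp_mapBiprodLift_eq hw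
  have hv := Functor.comp_eq_comp_map_snd_of_comp_mapBiprodLift_eq hw
  have : QuasiIso ((inducedF φ).map (w ≫ biprod.fst)) :=
    HomologicalComplex.quasiIso_of_comp_eq_comp hu
  exact ⟨Z, w ≫ biprod.fst, w ≫ biprod.snd, (hApp1 _).2 this, W, a, t, ha, ht,
    ⟨Homotopy.ofEq hu⟩, ⟨Homotopy.ofEq hv⟩⟩
end
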